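/- Position-based decoding error bound: let P_{SM} with 0 ≤ P ≤ I satisfy tr[P ρ_{SM}] ≥ 1 − κ and tr[P (γ_S ⊗ ρ_M)] ≤ κ'/e^m, where γ_S is a state and e^m is a positive integer. On M ⊗ A₁ ⊗ ⋯ ⊗ A_{e^m} (each A_j ≅ S), set Λ^j = P_{M A_j} ⊗ I applied to M and the j-th ancilla, Λ = ∑ⱼ Λ^j, and Ω^j = Λ^{-1/2} Λ^j Λ^{-1/2}. Let τ̂^j be the state ρ on M A_j tensored with γ on all other ancillas A_{j'}, j' ≠ j. Then tr[(I − Ω^j) τ̂^j] ≤ 2κ + 4κ' for every j. -/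

import Mathlib

open Matrix Kronecker
open scoped ComplexOrder Classical

noncomputable section

/-- Moore–Penrose pseudo-inverse square root of a Hermitian matrix
(eigenvalue `λ ↦ (√λ)⁻¹`, with `0⁻¹ = 0`); zero if the matrix is not Hermitian. -/
def pinvSqrt {n : Type*} [Fintype n] [DecidableEq n] (A : Matrix n n ℂ) : Matrix n n ℂ :=
  if h : A.IsHermitian then
    (h.eigenvectorUnitary : Matrix n n ℂ) *
      Matrix.diagonal (fun i => (((Real.sqrt (h.eigenvalues i))⁻¹ : ℝ) : ℂ)) *
      (h.eigenvectorUnitary : Matrix n n ℂ)ᴴ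
  else 0

variable {S M' : Type*} [Fintype S] [DecidableEq S] [Fintype M'] [DecidableEq M']

/-- The operator `Λ^j = P_{M A_j} ⊗ I` on `M ⊗ A₁ ⊗ ⋯ ⊗ A_N`, i.e. `P` applied to the
memory `M` and the `j`-th ancilla (each ancilla a copy of `S`). -/
def Lam (P : Matrix (S × M') (S × M') ℂ) (N : ℕ) (j : Fin N) :
    Matrix (M' × (Fin N → S)) (M' × (Fin N → S)) ℂ :=
  Matrix.of fun p q =>
    P (p.2 j, p.1) (q.2 j, q.1) *
      ∏ k ∈ Finset.univ.erase j, (if p.2 k = q.2 k then (1 : ℂ) else 0)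

/-- The state `τ̂^j`: `ρ` on `M ⊗ A_j` tensored with `γ` on all other ancillas. -/
def tauHat (ρ : Matrix (S × M') (S × M') ℂ) (γ : Matrix S S ℂ) (N : ℕ) (j : Fin N) :
    Matrix (M' × (Fin N → S)) (M' × (Fin N → S)) ℂ :=
  Matrix.of fun p q =>
    ρ (p.2 j, p.1) (q.2 j, q.1) * ∏ k ∈ Finset.univ.erase j, γ (p.2 k) (q.2 k)

open scoped MatrixOrder in
def Matrix.PosSemidef.sqrt {n : Type*} [Fintype n] [DecidableEq n] {A : Matrix n n ℂ}
    (_hA : A.PosSemidef) : Matrix n n ℂ :=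
  CFC.sqrt A

open scoped MatrixOrder in
lemma Matrix.PosSemidef.posSemidef_sqrt {n : Type*} [Fintype n] [DecidableEq n]
    {A : Matrix n n ℂ} (hA : A.PosSemidef) : hA.sqrt.PosSemidef :=
  (CFC.sqrt_nonneg A).posSemidef

open scoped MatrixOrder in
lemma Matrix.PosSemidef.sqrt_mul_self {n : Type*} [Fintype n] [DecidableEq n]
    {A : Matrix n n ℂ} (hA : A.PosSemidef) : hA.sqrt * hA.sqrt = A :=
  CFC.sqrt_mul_sqrt_self A hA.nonneg

namespace PBD
variable {n : Type*} [Fintype n] [DecidableEq n]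

lemma psd_trace_nonneg {A : Matrix n n ℂ} (hA : A.PosSemidef) : 0 ≤ A.trace := by
  rw [Matrix.trace]
  apply Finset.sum_nonneg
  intro i _
  have := hA.dotProduct_mulVec_nonneg (Pi.single i 1)
  simpa [dotProduct, Pi.single_apply, Matrix.mulVec, Finset.sum_ite_eq,
    Matrix.diag] using this

lemma psd_mul_trace_nonneg {A B : Matrix n n ℂ} (hA : A.PosSemidef) (hB : B.PosSemidef) :
    0 ≤ (A * B).trace := by
  have h1 : A * B = hA.sqrt * (hA.sqrt * B) := by
    rw [← Matrix.mul_assoc, hA.sqrt_mul_self]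
  rw [h1, Matrix.trace_mul_comm]
  have h2 : hA.sqrt * B * hA.sqrt = hA.sqrt * B * hA.sqrtᴴ := by
    rw [hA.posSemidef_sqrt.1.eq]
  exact psd_trace_nonneg (by rw [h2]; exact hB.mul_mul_conjTranspose_same _)


variable {Λ : Matrix n n ℂ}

def Fd (h : Λ.IsHermitian) (d : n → ℝ) : Matrix n n ℂ :=
  (h.eigenvectorUnitary : Matrix n n ℂ) *
    Matrix.diagonal (fun i => ((d i : ℝ) : ℂ)) *
    (h.eigenvectorUnitary : Matrix n n ℂ)ᴴ

variable (h : Λ.IsHermitian)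

lemma Fd_congr {d₁ d₂ : n → ℝ} (hd : ∀ i, d₁ i = d₂ i) : Fd h d₁ = Fd h d₂ := by
  have : d₁ = d₂ := funext hd
  rw [this]

lemma Fd_mul (d₁ d₂ : n → ℝ) : Fd h d₁ * Fd h d₂ = Fd h (fun i => d₁ i * d₂ i) := by
  unfold Fd
  have hu : (h.eigenvectorUnitary : Matrix n n ℂ)ᴴ * (h.eigenvectorUnitary : Matrix n n ℂ)
      = 1 := by
    rw [← Matrix.star_eq_conjTranspose]
    exact Matrix.mem_unitaryGroup_iff'.mp h.eigenvectorUnitary.2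
  calc (h.eigenvectorUnitary : Matrix n n ℂ) * Matrix.diagonal (fun i => ((d₁ i : ℝ) : ℂ)) *
        (h.eigenvectorUnitary : Matrix n n ℂ)ᴴ *
        ((h.eigenvectorUnitary : Matrix n n ℂ) * Matrix.diagonal (fun i => ((d₂ i : ℝ) : ℂ)) *
        (h.eigenvectorUnitary : Matrix n n ℂ)ᴴ)
      = (h.eigenvectorUnitary : Matrix n n ℂ) * (Matrix.diagonal (fun i => ((d₁ i : ℝ) : ℂ)) *
        ((h.eigenvectorUnitary : Matrix n n ℂ)ᴴ * (h.eigenvectorUnitary : Matrix n n ℂ)) *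
        Matrix.diagonal (fun i => ((d₂ i : ℝ) : ℂ))) * (h.eigenvectorUnitary : Matrix n n ℂ)ᴴ := by
        simp only [Matrix.mul_assoc]
    _ = (h.eigenvectorUnitary : Matrix n n ℂ) * (Matrix.diagonal (fun i => ((d₁ i * d₂ i : ℝ) : ℂ)))
        * (h.eigenvectorUnitary : Matrix n n ℂ)ᴴ := by
        rw [hu, Matrix.mul_one, Matrix.diagonal_mul_diagonal]
        simp only [Matrix.mul_assoc]
        congr 2
        ext i
        push_cast
        ring

lemma Fd_add (d₁ d₂ : n → ℝ) : Fd h d₁ + Fd h d₂ = Fd h (fun i => d₁ i + d₂ i) := by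
  unfold Fd
  have hdiag : (Matrix.diagonal (fun i => ((d₁ i : ℝ) : ℂ)))
      + Matrix.diagonal (fun i => ((d₂ i : ℝ) : ℂ))
      = Matrix.diagonal (fun i => ((d₁ i + d₂ i : ℝ) : ℂ)) := by
    rw [Matrix.diagonal_add]
    congr 1
    ext i
    push_cast
    ring
  rw [← Matrix.add_mul, ← Matrix.mul_add, hdiag]

lemma Fd_zero : Fd h (fun _ => 0) = 0 := by
  unfold Fd
  simp

lemma Fd_one : Fd h (fun _ => 1) = 1 := by
  unfold Fd
  have hu : (h.eigenvectorUnitary : Matrix n n ℂ) * (h.eigenvectorUnitary : Matrix n n ℂ)ᴴ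
      = 1 := by
    rw [← Matrix.star_eq_conjTranspose]
    exact Matrix.mem_unitaryGroup_iff.mp h.eigenvectorUnitary.2
  simp only [Complex.ofReal_one, Matrix.diagonal_one, Matrix.mul_one]
  exact hu

lemma Fd_spectral : Fd h h.eigenvalues = Λ := by
  unfold Fd
  conv_rhs => rw [h.spectral_theorem]
  rw [← Matrix.star_eq_conjTranspose]
  rfl

lemma Fd_herm (d : n → ℝ) : (Fd h d).IsHermitian := by
  unfold Fd Matrix.IsHermitian
  simp only [Matrix.conjTranspose_mul, Matrix.conjTranspose_conjTranspose,
    Matrix.diagonal_conjTranspose]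
  rw [Matrix.mul_assoc]
  congr 1
  ext i
  simp [Pi.star_apply, RCLike.star_def]

lemma Fd_psd {d : n → ℝ} (hd : ∀ i, 0 ≤ d i) : (Fd h d).PosSemidef := by
  unfold Fd
  refine Matrix.PosSemidef.mul_mul_conjTranspose_same ?_ _
  rw [Matrix.posSemidef_diagonal_iff]
  intro i
  rw [Complex.le_def]
  exact ⟨by simpa using hd i, by simp⟩

lemma pinvSqrt_eq_Fd : pinvSqrt Λ = Fd h (fun i => (Real.sqrt (h.eigenvalues i))⁻¹) := by
  unfold pinvSqrt Fd
  rw [dif_pos h]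

lemma psd_eq_zero_of_neg {A : Matrix n n ℂ} (hA : A.PosSemidef) (hA' : (-A).PosSemidef) :
    A = 0 := by
  have h : ∀ x : n → ℂ, A *ᵥ x = 0 := by
    intro x
    rw [← hA.dotProduct_mulVec_zero_iff]
    have h1 := hA.dotProduct_mulVec_nonneg x
    have h2 := hA'.dotProduct_mulVec_nonneg x
    rw [Matrix.neg_mulVec, dotProduct_neg, neg_nonneg] at h2
    exact le_antisymm h2 h1
  ext i j
  have := congrFun (h (Pi.single j 1)) i
  simpa [Matrix.mulVec_single] using this

lemma psd_of_sq_le {A M : Matrix n n ℂ} (hA : A.PosSemidef) (hM : M.PosSemidef)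
    (h : (M * M - A * A).PosSemidef) : (M - A).PosSemidef := by
  have hD : (A - M).IsHermitian := hA.1.sub hM.1
  -- all eigenvalues of D := A - M are ≤ 0
  have hev : ∀ i, hD.eigenvalues i ≤ 0 := by
    intro i
    by_contra hpos
    push_neg at hpos
    set v : n → ℂ := ⇑(hD.eigenvectorBasis i) with hv
    have hvec : (A - M) *ᵥ v = (hD.eigenvalues i : ℂ) • v := by
      have := hD.mulVec_eigenvectorBasis i
      rw [RCLike.real_smul_eq_coe_smul (K := ℂ)] at this
      exact this
    have hvne : v ≠ 0 := by
      intro h0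
      have : hD.eigenvectorBasis i = 0 := by
        apply PiLp.ext; intro x; exact congrFun h0 x
      exact hD.eigenvectorBasis.orthonormal.ne_zero i this
    set μ : ℝ := hD.eigenvalues i
    set qA : ℂ := star v ⬝ᵥ A *ᵥ v
    set qM : ℂ := star v ⬝ᵥ M *ᵥ v
    have hqA : 0 ≤ qA := hA.dotProduct_mulVec_nonneg v
    have hqM : 0 ≤ qM := hM.dotProduct_mulVec_nonneg v
    -- star v ⬝ᵥ ((A+M)*(A-M) + (A-M)*(A+M)) *ᵥ v = 2 μ (qA + qM)
    have key : star v ⬝ᵥ ((A + M) * (A - M) + (A - M) * (A + M)) *ᵥ v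
        = (2 * μ : ℂ) * (qA + qM) := by
      have e1 : star v ⬝ᵥ ((A + M) * (A - M)) *ᵥ v = (μ : ℂ) * (qA + qM) := by
        rw [← Matrix.mulVec_mulVec, hvec, Matrix.mulVec_smul, dotProduct_smul]
        simp [qA, qM, Matrix.add_mulVec, dotProduct_add, smul_eq_mul, mul_comm]
      have e2 : star v ⬝ᵥ ((A - M) * (A + M)) *ᵥ v = (μ : ℂ) * (qA + qM) := by
        rw [← Matrix.mulVec_mulVec, Matrix.dotProduct_mulVec]
        have hsv : star v ᵥ* (A - M) = star ((A - M) *ᵥ v) := by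
          rw [Matrix.star_mulVec, hD.eq]
        rw [hsv, hvec]
        simp [qA, qM, dotProduct_add, Matrix.add_mulVec, star_smul,
          smul_dotProduct, smul_eq_mul, mul_comm]
        ring
      rw [Matrix.add_mulVec, dotProduct_add, e1, e2]
      ring
    have hid : (A + M) * (A - M) + (A - M) * (A + M) = A * A + A * A - (M * M + M * M) := by
      noncomm_ring
    have hneg : star v ⬝ᵥ ((A + M) * (A - M) + (A - M) * (A + M)) *ᵥ v ≤ 0 := by
      rw [hid]
      have h2 := h.dotProduct_mulVec_nonneg v
      have e : A * A + A * A - (M * M + M * M) = -((M*M - A*A) + (M*M - A*A)) := by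
        noncomm_ring
      rw [e, Matrix.neg_mulVec, dotProduct_neg, neg_nonpos]
      have := h.add h
      exact this.dotProduct_mulVec_nonneg v
    rw [key] at hneg
    -- deduce qA + qM ≤ 0 via real parts
    have hq : qA + qM = 0 := by
      have hsum : 0 ≤ qA + qM := add_nonneg hqA hqM
      rw [Complex.le_def] at hsum
      have hre : 0 ≤ (qA + qM).re ∧ (qA + qM).im = 0 := by
        constructor
        · simpa using hsum.1
        · symm; simpa using hsum.2
      have hle : ((2 * μ : ℂ) * (qA + qM)).re ≤ 0 := by
        rw [Complex.le_def] at hneg; simpa using hneg.1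
      have : (2 * μ) * (qA + qM).re ≤ 0 := by
        have : ((2 * μ : ℂ) * (qA + qM)).re = (2*μ) * (qA+qM).re - 0 * (qA+qM).im := by
          simp [Complex.mul_re]
        simpa [this] using hle
      have hre0 : (qA + qM).re = 0 := by nlinarith [hre.1]
      apply Complex.ext <;> simp [hre0, hre.2]
    have hqA0 : qA = 0 := by
      have h1 : qA ≤ 0 := by
        have : qA = -qM := by linear_combination hq
        rw [this, neg_nonpos]; exact hqM
      exact le_antisymm h1 hqA
    have hqM0 : qM = 0 := by linear_combination hq - hqA0
    have hAv : A *ᵥ v = 0 := (hA.dotProduct_mulVec_zero_iff v).mp hqA0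
    have hMv : M *ᵥ v = 0 := (hM.dotProduct_mulVec_zero_iff v).mp hqM0
    have : (μ : ℂ) • v = 0 := by
      rw [← hvec, Matrix.sub_mulVec, hAv, hMv, sub_zero]
    rcases smul_eq_zero.mp this with hμ | hv0
    · exact absurd (by exact_mod_cast hμ : μ = 0) (ne_of_gt hpos)
    · exact hvne hv0
  -- now M - A = -(A-M) is PSD
  have hspec := hD.spectral_theorem
  have : M - A = (hD.eigenvectorUnitary : Matrix n n ℂ) *
      Matrix.diagonal (fun i => (((- hD.eigenvalues i : ℝ)) : ℂ)) *
      (hD.eigenvectorUnitary : Matrix n n ℂ)ᴴ := by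
    rw [(neg_sub A M).symm]
    conv_lhs => rw [hspec, Unitary.conjStarAlgAut_apply]
    rw [← Matrix.neg_mul, ← Matrix.mul_neg]
    congr 1
    rw [Matrix.diagonal_neg]
    congr 1
    ext i
    simp [Function.comp]
  rw [this]
  refine Matrix.PosSemidef.mul_mul_conjTranspose_same ?_ _
  rw [Matrix.posSemidef_diagonal_iff]
  intro i
  have := hev i
  rw [Complex.le_def]
  constructor
  · simpa using this
  · simp


set_option maxHeartbeats 1000000 in
/-- **Hayashi–Nagaoka operator inequality** -/
lemma hayashi_nagaoka {A B : Matrix n n ℂ} (hA : A.PosSemidef) (hB : B.PosSemidef)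
    (h1A : ((1 : Matrix n n ℂ) - A).PosSemidef) :
    ((((1:Matrix n n ℂ) - A) + (1 - A) + (B + B + B + B)) -
      (1 - pinvSqrt (A + B) * A * pinvSqrt (A + B))).PosSemidef := by
  have hΛ : (A + B).PosSemidef := hA.add hB
  have h : (A + B).IsHermitian := hΛ.1
  have hev : ∀ i, 0 ≤ h.eigenvalues i := fun i => hΛ.eigenvalues_nonneg i
  set X : Matrix n n ℂ := Fd h (fun i => (Real.sqrt (h.eigenvalues i))⁻¹) with hXdef
  set M : Matrix n n ℂ := Fd h (fun i => Real.sqrt (h.eigenvalues i)) with hMdef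
  set Pi : Matrix n n ℂ := Fd h (fun i => if h.eigenvalues i = 0 then 0 else 1) with hPidef
  set Q : Matrix n n ℂ := Fd h (fun i => if h.eigenvalues i = 0 then 1 else 0) with hQdef
  have hpinv : pinvSqrt (A + B) = X := pinvSqrt_eq_Fd h
  -- basic relations
  have hMM : M * M = A + B := by
    rw [hMdef, Fd_mul]
    rw [Fd_congr h (d₂ := h.eigenvalues) (fun i => Real.mul_self_sqrt (hev i)), Fd_spectral]
  have hXM : X * M = Pi := by
    rw [hXdef, hMdef, hPidef, Fd_mul]
    refine Fd_congr h (fun i => ?_)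
    by_cases h0 : h.eigenvalues i = 0
    · simp [h0, Real.sqrt_zero]
    · have : Real.sqrt (h.eigenvalues i) ≠ 0 :=
        Real.sqrt_ne_zero'.mpr (lt_of_le_of_ne (hev i) (Ne.symm h0))
      simp [h0, inv_mul_cancel₀ this]
  have hMX : M * X = Pi := by
    rw [hXdef, hMdef, hPidef, Fd_mul]
    refine Fd_congr h (fun i => ?_)
    by_cases h0 : h.eigenvalues i = 0
    · simp [h0, Real.sqrt_zero]
    · have : Real.sqrt (h.eigenvalues i) ≠ 0 :=
        Real.sqrt_ne_zero'.mpr (lt_of_le_of_ne (hev i) (Ne.symm h0))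
      simp [h0, mul_inv_cancel₀ this]
  have hPiPi : Pi * Pi = Pi := by
    rw [hPidef, Fd_mul]
    refine Fd_congr h (fun i => ?_)
    by_cases h0 : h.eigenvalues i = 0 <;> simp [h0]
  have hQM : Q * M = 0 := by
    rw [hQdef, hMdef, Fd_mul, ← Fd_zero h]
    refine Fd_congr h (fun i => ?_)
    by_cases h0 : h.eigenvalues i = 0 <;> simp [h0, Real.sqrt_zero]
  have hMQ : M * Q = 0 := by
    rw [hQdef, hMdef, Fd_mul, ← Fd_zero h]
    refine Fd_congr h (fun i => ?_)
    by_cases h0 : h.eigenvalues i = 0 <;> simp [h0, Real.sqrt_zero]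
  have hPiQ : Pi + Q = 1 := by
    rw [hPidef, hQdef, Fd_add, ← Fd_one h]
    refine Fd_congr h (fun i => ?_)
    by_cases h0 : h.eigenvalues i = 0 <;> simp [h0]
  have hQpsd : Q.PosSemidef := Fd_psd h (fun i => by by_cases h0 : h.eigenvalues i = 0 <;>
    simp [h0])
  have hQherm : Qᴴ = Q := (Fd_herm h _).eq
  have hMherm : Mᴴ = M := (Fd_herm h _).eq
  have hXherm : Xᴴ = X := (Fd_herm h _).eq
  have hMpsd : M.PosSemidef := Fd_psd h (fun i => Real.sqrt_nonneg _)
  clear_value X M Pi Q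
  clear hXdef hMdef hPidef hQdef
  have hQeq : Q = 1 - Pi := by rw [← hPiQ]; noncomm_ring
  -- support lemma
  have hsupp : ∀ C : Matrix n n ℂ, C.PosSemidef → ((A + B) - C).PosSemidef →
      Pi * C = C ∧ C * Pi = C := by
    intro C hC hΛC
    have hQCQ : (Q * C * Q).PosSemidef := by
      have := hC.mul_mul_conjTranspose_same Q
      rwa [hQherm] at this
    have hQCQ' : (-(Q * C * Q)).PosSemidef := by
      have hQΛQ : Q * (A + B) * Q = 0 := by
        rw [← hMM, show Q * (M * M) * Q = (Q * M) * (M * Q) by noncomm_ring, hQM, hMQ]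
        simp
      have h0 : Q * ((A + B) - C) * Q = -(Q * C * Q) := by
        have e : Q * ((A + B) - C) * Q = Q * (A + B) * Q - Q * C * Q := by noncomm_ring
        rw [e, hQΛQ]
        noncomm_ring
      have := hΛC.mul_mul_conjTranspose_same Q
      rwa [hQherm, h0] at this
    have hzero : Q * C * Q = 0 := psd_eq_zero_of_neg hQCQ hQCQ'
    have hsC : hC.sqrt * Q = 0 := by
      have e : (hC.sqrt * Q)ᴴ * (hC.sqrt * Q) = Q * C * Q := by
        rw [Matrix.conjTranspose_mul, hQherm, hC.posSemidef_sqrt.1.eq]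
        calc Q * hC.sqrt * (hC.sqrt * Q) = Q * (hC.sqrt * hC.sqrt) * Q := by noncomm_ring
          _ = Q * C * Q := by rw [hC.sqrt_mul_self]
      rw [← Matrix.conjTranspose_mul_self_eq_zero, e, hzero]
    have hCQ : C * Q = 0 := by
      calc C * Q = hC.sqrt * (hC.sqrt * Q) := by
            rw [← Matrix.mul_assoc, hC.sqrt_mul_self]
        _ = 0 := by rw [hsC, Matrix.mul_zero]
    have hQC : Q * C = 0 := by
      have := congrArg Matrix.conjTranspose hCQ
      rwa [Matrix.conjTranspose_mul, hQherm, hC.1.eq, Matrix.conjTranspose_zero] at this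
    constructor
    · have e : (Pi + Q) * C = C := by rw [hPiQ, Matrix.one_mul]
      rw [Matrix.add_mul, hQC, add_zero] at e
      exact e
    · have e : C * (Pi + Q) = C := by rw [hPiQ, Matrix.mul_one]
      rw [Matrix.mul_add, hCQ, add_zero] at e
      exact e
  obtain ⟨hPiA, hAPi⟩ := hsupp A hA (by
    have e : A + B - A = B := by noncomm_ring
    rwa [e])
  obtain ⟨hPiB, hBPi⟩ := hsupp B hB (by
    have e : A + B - B = A := by noncomm_ring
    rwa [e])
  -- M - A is PSD
  have hs : hA.sqrt * hA.sqrt = A := hA.sqrt_mul_self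
  have hAAA : (A - A * A).PosSemidef := by
    have heq : hA.sqrt * (1 - A) * hA.sqrtᴴ = A - A * A := by
      rw [hA.posSemidef_sqrt.1.eq]
      have e2 : hA.sqrt * A * hA.sqrt = A * A := by
        calc hA.sqrt * A * hA.sqrt = hA.sqrt * (hA.sqrt * hA.sqrt) * hA.sqrt := by rw [hs]
          _ = (hA.sqrt * hA.sqrt) * (hA.sqrt * hA.sqrt) := by noncomm_ring
          _ = A * A := by rw [hs]
      calc hA.sqrt * (1 - A) * hA.sqrt
          = hA.sqrt * hA.sqrt - hA.sqrt * A * hA.sqrt := by noncomm_ring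
        _ = A - A * A := by rw [hs, e2]
    rw [← heq]
    exact h1A.mul_mul_conjTranspose_same _
  have hMA : (M - A).PosSemidef := by
    apply psd_of_sq_le hA hMpsd
    have e : M * M - A * A = B + (A - A * A) := by rw [hMM]; noncomm_ring
    rw [e]
    exact hB.add hAAA
  -- the T part
  have hCC : hB.sqrt * hB.sqrt = B := hB.sqrt_mul_self
  have hCherm : hB.sqrtᴴ = hB.sqrt := hB.posSemidef_sqrt.1.eq
  set C : Matrix n n ℂ := hB.sqrt with hCdef
  set W : Matrix n n ℂ := M * C + M * C - C with hWdef
  have hWc : Wᴴ = C * M + C * M - C := by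
    rw [hWdef, Matrix.conjTranspose_sub, Matrix.conjTranspose_add, Matrix.conjTranspose_mul,
      hCherm, hMherm]
  have hT : M * B * M + M * B * M + ((1 - M) * (A + B) * (1 - M)
        + (1 - M) * (A + B) * (1 - M)) - B
      = W * Wᴴ + ((1 - M) * A * (1 - M) + (1 - M) * A * (1 - M)) := by
    rw [hWc, hWdef, ← hCC]
    noncomm_ring
  have hTpsd : (M * B * M + M * B * M + ((1 - M) * (A + B) * (1 - M)
        + (1 - M) * (A + B) * (1 - M)) - B).PosSemidef := by
    rw [hT]
    refine (Matrix.posSemidef_self_mul_conjTranspose W).add (Matrix.PosSemidef.add ?_ ?_) <;>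
    · have := hA.mul_mul_conjTranspose_same (1 - M)
      rwa [show ((1 - M) : Matrix n n ℂ)ᴴ = 1 - M by
        rw [Matrix.conjTranspose_sub, Matrix.conjTranspose_one, hMherm]] at this
  -- E part
  have hEpsd : (M * (M - A) * M).PosSemidef := by
    have := hMA.mul_mul_conjTranspose_same M
    rwa [hMherm] at this
  -- K
  set K : Matrix n n ℂ := (M * (M - A) * M + M * (M - A) * M + M * (M - A) * M
      + M * (M - A) * M) + (M * B * M + M * B * M + ((1 - M) * (A + B) * (1 - M)
        + (1 - M) * (A + B) * (1 - M)) - B) with hKdef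
  have hKpsd : K.PosSemidef := (((hEpsd.add hEpsd).add hEpsd).add hEpsd).add hTpsd
  have hKeq : K = ((M * M) + (M * M)) - (M * A * M + M * A * M)
      + (M * B * M + M * B * M + M * B * M + M * B * M) - B := by
    rw [hKdef]
    have hBs : B = M * M - A := by rw [hMM]; noncomm_ring
    rw [hBs]
    noncomm_ring
  clear_value K
  clear hKdef hTpsd hT hWc hWdef hCdef
  -- X K X
  have e1 : X * K * X = (X * M * (M * X) + X * M * (M * X))
      - (X * M * A * (M * X) + X * M * A * (M * X))
      + (X * M * B * (M * X) + X * M * B * (M * X) + X * M * B * (M * X) + X * M * B * (M * X))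
      - X * B * X := by
    rw [hKeq]
    noncomm_ring
  rw [hXM, hMX, hPiPi, hPiA, hPiB, hAPi, hBPi] at e1
  -- X A X + X B X = Pi
  have hXAXB : X * A * X + X * B * X = Pi := by
    have e : X * ((A + B) * X) = X * A * X + X * B * X := by noncomm_ring
    rw [← e, ← hMM]
    have e2 : X * (M * M * X) = (X * M) * (M * X) := by noncomm_ring
    rw [e2, hXM, hMX, hPiPi]
  have hXAX : X * A * X = Pi - X * B * X := by
    rw [← hXAXB]; noncomm_ring
  -- final identity
  have hG : (((1:Matrix n n ℂ) - A) + (1 - A) + (B + B + B + B)) -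
      (1 - pinvSqrt (A + B) * A * pinvSqrt (A + B)) = Q + X * K * X := by
    rw [hpinv, e1, hXAX, hQeq]
    noncomm_ring
  rw [hG]
  refine hQpsd.add ?_
  have := hKpsd.mul_mul_conjTranspose_same X
  rwa [hXherm] at this


end PBD

namespace PBD
variable {S M' : Type*} [Fintype S] [DecidableEq S] [Fintype M'] [DecidableEq M']

/-- master sum-factorization lemma -/
lemma master {N : ℕ} (F : Fin N → S → S → ℂ) :
    ∑ p2 : Fin N → S, ∑ q2 : Fin N → S, ∏ k, F k (p2 k) (q2 k)
      = ∏ k, ∑ a : S, ∑ b : S, F k a b := by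
  have e1 : ∑ p2 : Fin N → S, ∑ q2 : Fin N → S, ∏ k, F k (p2 k) (q2 k)
      = ∑ x : (Fin N → S) × (Fin N → S), ∏ k, F k (x.1 k) (x.2 k) := by
    rw [Fintype.sum_prod_type]
  rw [e1]
  have e2 : ∑ x : (Fin N → S) × (Fin N → S), ∏ k, F k (x.1 k) (x.2 k)
      = ∑ h : Fin N → S × S, ∏ k, F k ((h k).1) ((h k).2) := by
    apply Fintype.sum_equiv (Equiv.arrowProdEquivProdArrow (Fin N) (fun _ => S) (fun _ => S)).symm
    intro h
    rfl
  rw [e2]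
  have e3 : ∑ h : Fin N → S × S, ∏ k, F k ((h k).1) ((h k).2)
      = ∏ k, ∑ s : S × S, F k s.1 s.2 := (Fintype.prod_sum (fun k (s : S × S) => F k s.1 s.2)).symm
  rw [e3]
  exact Finset.prod_congr rfl fun k _ => by rw [Fintype.sum_prod_type]

lemma trace_mul_sum {m : Type*} [Fintype m] (A B : Matrix m m ℂ) :
    (A * B).trace = ∑ p, ∑ q, A p q * B q p := by
  simp [Matrix.trace, Matrix.diag, Matrix.mul_apply]



lemma prod_erase_subtype {N : ℕ} (j : Fin N) (f : Fin N → ℂ) :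
    ∏ k ∈ Finset.univ.erase j, f k = ∏ k : {k : Fin N // k ≠ j}, f k.1 := by
  rw [Finset.prod_subtype (p := fun k => k ≠ j) (Finset.univ.erase j) (by intro x; simp [Finset.mem_erase]) f]

lemma sum_conj_sqrt {m : Type*} [Fintype m] [DecidableEq m] {ρ : Matrix m m ℂ}
    (hρ : ρ.PosSemidef) (a b : m) :
    ∑ v, star (hρ.sqrt v a) * hρ.sqrt v b = ρ a b := by
  have e : hρ.sqrtᴴ * hρ.sqrt = ρ := by
    rw [hρ.posSemidef_sqrt.1.eq, hρ.sqrt_mul_self]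
  have := congrFun (congrFun (congrArg (fun (A : Matrix m m ℂ) => (A : Matrix m m ℂ)) e) a) b
  simpa [Matrix.mul_apply, Matrix.conjTranspose_apply] using this

lemma tauHat_posSemidef {N : ℕ} (j : Fin N) {ρ : Matrix (S × M') (S × M') ℂ}
    {γ : Matrix S S ℂ} (hρ : ρ.PosSemidef) (hγ : γ.PosSemidef) :
    (tauHat ρ γ N j).PosSemidef := by
  set D : Matrix ((S × M') × ({k : Fin N // k ≠ j} → S)) (M' × (Fin N → S)) ℂ :=
    Matrix.of (fun v p => hρ.sqrt v.1 (p.2 j, p.1) *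
      ∏ k : {k : Fin N // k ≠ j}, hγ.sqrt (v.2 k) (p.2 k.1)) with hD
  have key : tauHat ρ γ N j = Dᴴ * D := by
    ext p q
    rw [Matrix.mul_apply]
    have e1 : ∀ v : (S × M') × ({k : Fin N // k ≠ j} → S),
        Dᴴ p v * D v q
          = (star (hρ.sqrt v.1 (p.2 j, p.1)) * hρ.sqrt v.1 (q.2 j, q.1)) *
            ∏ k : {k : Fin N // k ≠ j},
              (star (hγ.sqrt (v.2 k) (p.2 k.1)) * hγ.sqrt (v.2 k) (q.2 k.1)) := by
      intro v
      rw [Matrix.conjTranspose_apply, hD]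
      simp only [Matrix.of_apply, star_mul']
      rw [star_prod, Finset.prod_mul_distrib]
      ring
    rw [Finset.sum_congr rfl (fun v _ => e1 v), Fintype.sum_prod_type]
    have e2 : ∀ v1 : S × M',
        ∑ v2 : {k : Fin N // k ≠ j} → S,
          (star (hρ.sqrt v1 (p.2 j, p.1)) * hρ.sqrt v1 (q.2 j, q.1)) *
            ∏ k : {k : Fin N // k ≠ j},
              (star (hγ.sqrt (v2 k) (p.2 k.1)) * hγ.sqrt (v2 k) (q.2 k.1))
        = (star (hρ.sqrt v1 (p.2 j, p.1)) * hρ.sqrt v1 (q.2 j, q.1)) *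
            ∏ k : {k : Fin N // k ≠ j}, γ (p.2 k.1) (q.2 k.1) := by
      intro v1
      rw [← Finset.mul_sum]
      congr 1
      rw [← Fintype.prod_sum (fun (k : {k : Fin N // k ≠ j}) (s : S) =>
        star (hγ.sqrt s (p.2 k.1)) * hγ.sqrt s (q.2 k.1))]
      exact Finset.prod_congr rfl fun k _ => sum_conj_sqrt hγ _ _
    rw [Finset.sum_congr rfl (fun v1 _ => e2 v1), ← Finset.sum_mul,
      Finset.sum_congr rfl (fun v1 (_ : v1 ∈ Finset.univ) => rfl)]
    rw [show ∑ v1 : S × M', star (hρ.sqrt v1 (p.2 j, p.1)) * hρ.sqrt v1 (q.2 j, q.1)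
      = ρ (p.2 j, p.1) (q.2 j, q.1) from sum_conj_sqrt hρ _ _]
    rw [tauHat]
    simp only [Matrix.of_apply]
    congr 1
    rw [prod_erase_subtype]
  rw [key]
  exact Matrix.posSemidef_conjTranspose_mul_self D



lemma Lam_eq_tauHat {N : ℕ} (P : Matrix (S × M') (S × M') ℂ) (j : Fin N) :
    Lam P N j = tauHat P (1 : Matrix S S ℂ) N j := by
  ext p q
  simp [Lam, tauHat, Matrix.one_apply]

lemma tauHat_add {N : ℕ} (P R : Matrix (S × M') (S × M') ℂ) (γ : Matrix S S ℂ) (j : Fin N) :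
    tauHat (P + R) γ N j = tauHat P γ N j + tauHat R γ N j := by
  ext p q
  simp [tauHat, add_mul]

lemma Lam_one {N : ℕ} (j : Fin N) :
    Lam (1 : Matrix (S × M') (S × M') ℂ) N j = 1 := by
  ext p q
  rw [Lam]
  simp only [Matrix.of_apply, Matrix.one_apply, Finset.prod_boole]
  by_cases h1 : (p.2 j, p.1) = (q.2 j, q.1) <;>
    by_cases h2 : ∀ k ∈ Finset.univ.erase j, p.2 k = q.2 k
  · have hpq : p = q := by
      obtain ⟨hj, h1'⟩ := Prod.mk.injEq .. ▸ h1
      refine Prod.ext h1' (funext fun k => ?_)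
      by_cases hk : k = j
      · rw [hk]; exact Prod.ext_iff.mp h1 |>.1
      · exact h2 k (by simp [Finset.mem_erase, hk])
    simp [hpq, h1, h2]
  · have hpq : p ≠ q := by
      intro hpq
      exact h2 fun k _ => by rw [hpq]
    simp [hpq, h1, h2]
    push_neg at h2
    obtain ⟨k, hk, hne⟩ := h2
    exact ⟨k, (Finset.mem_erase.mp hk).1, hne⟩
  · have hpq : p ≠ q := by
      intro hpq
      exact h1 (by rw [hpq])
    simp [hpq, h1, h2]
  · have hpq : p ≠ q := by
      intro hpq
      exact h1 (by rw [hpq])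
    simp [hpq, h1, h2]

lemma one_sub_Lam {N : ℕ} (P : Matrix (S × M') (S × M') ℂ) (j : Fin N) :
    (1 : Matrix (M' × (Fin N → S)) (M' × (Fin N → S)) ℂ) - Lam P N j
      = Lam (1 - P) N j := by
  have h := tauHat_add (1 - P) P (1 : Matrix S S ℂ) j
  rw [sub_add_cancel] at h
  rw [← Lam_eq_tauHat (1 : Matrix (S × M') (S × M') ℂ) j, Lam_one] at h
  rw [Lam_eq_tauHat P j, Lam_eq_tauHat (1 - P) j, h]
  noncomm_ring



lemma sum4_comm (t : S → M' → S → M' → ℂ) :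
    ∑ p1 : M', ∑ q1 : M', ∑ a : S, ∑ b : S, t a p1 b q1
      = ∑ a : S, ∑ p1 : M', ∑ b : S, ∑ q1 : M', t a p1 b q1 := by
  calc ∑ p1 : M', ∑ q1 : M', ∑ a : S, ∑ b : S, t a p1 b q1
      = ∑ p1 : M', ∑ a : S, ∑ q1 : M', ∑ b : S, t a p1 b q1 :=
        Finset.sum_congr rfl fun p1 _ => Finset.sum_comm
    _ = ∑ a : S, ∑ p1 : M', ∑ q1 : M', ∑ b : S, t a p1 b q1 := Finset.sum_comm
    _ = ∑ a : S, ∑ p1 : M', ∑ b : S, ∑ q1 : M', t a p1 b q1 :=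
        Finset.sum_congr rfl fun a _ => Finset.sum_congr rfl fun p1 _ => Finset.sum_comm

lemma trace_lam_tauHat_same {N : ℕ} (Q ρ : Matrix (S × M') (S × M') ℂ)
    (γ : Matrix S S ℂ) (hγtr : γ.trace = 1) (j : Fin N) :
    (Lam Q N j * tauHat ρ γ N j).trace = (Q * ρ).trace := by
  rw [trace_mul_sum, trace_mul_sum]
  simp only [Lam, tauHat, Matrix.of_apply, Fintype.sum_prod_type]
  have inner : ∀ p1 q1 : M',
      ∑ p2 : Fin N → S, ∑ q2 : Fin N → S,
        (Q (p2 j, p1) (q2 j, q1) *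
            ∏ k ∈ Finset.univ.erase j, (if p2 k = q2 k then (1:ℂ) else 0)) *
          (ρ (q2 j, q1) (p2 j, p1) * ∏ k ∈ Finset.univ.erase j, γ (q2 k) (p2 k))
      = ∑ a : S, ∑ b : S, Q (a, p1) (b, q1) * ρ (b, q1) (a, p1) := by
    intro p1 q1
    set F : Fin N → S → S → ℂ := fun k a b =>
      if k = j then Q (a, p1) (b, q1) * ρ ((b, q1)) ((a, p1))
      else (if a = b then (1:ℂ) else 0) * γ b a with hF
    have hint : ∀ p2 q2 : Fin N → S,
        (Q (p2 j, p1) (q2 j, q1) *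
            ∏ k ∈ Finset.univ.erase j, (if p2 k = q2 k then (1:ℂ) else 0)) *
          (ρ (q2 j, q1) (p2 j, p1) * ∏ k ∈ Finset.univ.erase j, γ (q2 k) (p2 k))
        = ∏ k, F k (p2 k) (q2 k) := by
      intro p2 q2
      rw [← Finset.mul_prod_erase Finset.univ _ (Finset.mem_univ j)]
      have h1 : F j (p2 j) (q2 j) = Q (p2 j, p1) (q2 j, q1) * ρ (q2 j, q1) (p2 j, p1) := by
        simp [hF]
      have h2 : ∏ k ∈ Finset.univ.erase j, F k (p2 k) (q2 k)
          = ∏ k ∈ Finset.univ.erase j,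
              ((if p2 k = q2 k then (1:ℂ) else 0) * γ (q2 k) (p2 k)) :=
        Finset.prod_congr rfl fun k hk => by simp [hF, (Finset.mem_erase.mp hk).1]
      rw [h1, h2, Finset.prod_mul_distrib]
      ring
    rw [Finset.sum_congr rfl fun p2 _ => Finset.sum_congr rfl fun q2 _ => hint p2 q2]
    rw [master F]
    rw [← Finset.mul_prod_erase Finset.univ _ (Finset.mem_univ j)]
    have h3 : ∑ a : S, ∑ b : S, F j a b
        = ∑ a : S, ∑ b : S, Q (a, p1) (b, q1) * ρ (b, q1) (a, p1) := by
      simp [hF]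
    have h4 : ∏ k ∈ Finset.univ.erase j, (∑ a : S, ∑ b : S, F k a b) = 1 := by
      rw [Finset.prod_congr rfl (fun k hk => ?_), Finset.prod_const_one]
      have hkj := (Finset.mem_erase.mp hk).1
      have : ∑ a : S, ∑ b : S, F k a b = ∑ a : S, γ a a := by
        refine Finset.sum_congr rfl fun a _ => ?_
        simp [hF, hkj, ite_mul, Finset.sum_ite_eq]
      rw [this]
      exact hγtr
    rw [h3, h4, mul_one]
  rw [Finset.sum_congr rfl fun p1 _ => (by
    rw [Finset.sum_comm]
    exact Finset.sum_congr rfl fun q1 _ => inner p1 q1 :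
      ∑ p2 : Fin N → S, ∑ q1 : M', ∑ q2 : Fin N → S,
        (Q (p2 j, p1) (q2 j, q1) *
            ∏ k ∈ Finset.univ.erase j, (if p2 k = q2 k then (1:ℂ) else 0)) *
          (ρ (q2 j, q1) (p2 j, p1) * ∏ k ∈ Finset.univ.erase j, γ (q2 k) (p2 k))
      = ∑ q1 : M', ∑ a : S, ∑ b : S, Q (a, p1) (b, q1) * ρ (b, q1) (a, p1))]
  exact sum4_comm (fun a p1 b q1 => Q (a, p1) (b, q1) * ρ (b, q1) (a, p1))



lemma trace_lam_tauHat_ne {N : ℕ} (Q ρ : Matrix (S × M') (S × M') ℂ)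
    (γ : Matrix S S ℂ) (hγtr : γ.trace = 1) {j j' : Fin N} (hjj : j' ≠ j) :
    (Lam Q N j' * tauHat ρ γ N j).trace
      = (Q * (γ ⊗ₖ (Matrix.of fun a b : M' => ∑ s, ρ (s, a) (s, b)))).trace := by
  rw [trace_mul_sum, trace_mul_sum]
  simp only [Lam, tauHat, Matrix.of_apply, Fintype.sum_prod_type,
    Matrix.kroneckerMap_apply]
  have inner : ∀ p1 q1 : M',
      ∑ p2 : Fin N → S, ∑ q2 : Fin N → S,
        (Q (p2 j', p1) (q2 j', q1) *
            ∏ k ∈ Finset.univ.erase j', (if p2 k = q2 k then (1:ℂ) else 0)) *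
          (ρ (q2 j, q1) (p2 j, p1) * ∏ k ∈ Finset.univ.erase j, γ (q2 k) (p2 k))
      = ∑ a : S, ∑ b : S, Q (a, p1) (b, q1) * (γ b a * ∑ s : S, ρ (s, q1) (s, p1)) := by
    intro p1 q1
    set F : Fin N → S → S → ℂ := fun k a b =>
      if k = j then (if a = b then (1:ℂ) else 0) * ρ ((b, q1)) ((a, p1))
      else if k = j' then Q ((a, p1)) ((b, q1)) * γ b a
      else (if a = b then (1:ℂ) else 0) * γ b a with hF
    have hjmem : j ∈ Finset.univ.erase j' := by simp [Finset.mem_erase, hjj.symm]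
    have hj'mem : j' ∈ Finset.univ.erase j := by simp [Finset.mem_erase, hjj]
    have hint : ∀ p2 q2 : Fin N → S,
        (Q (p2 j', p1) (q2 j', q1) *
            ∏ k ∈ Finset.univ.erase j', (if p2 k = q2 k then (1:ℂ) else 0)) *
          (ρ (q2 j, q1) (p2 j, p1) * ∏ k ∈ Finset.univ.erase j, γ (q2 k) (p2 k))
        = ∏ k, F k (p2 k) (q2 k) := by
      intro p2 q2
      have rhs_eq : ∏ k, F k (p2 k) (q2 k)
          = F j (p2 j) (q2 j) * (F j' (p2 j') (q2 j') *
              ∏ k ∈ (Finset.univ.erase j).erase j', F k (p2 k) (q2 k)) := by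
        rw [← Finset.mul_prod_erase Finset.univ _ (Finset.mem_univ j),
          ← Finset.mul_prod_erase (Finset.univ.erase j) _ hj'mem]
      rw [rhs_eq]
      have h1 : F j (p2 j) (q2 j)
          = (if p2 j = q2 j then (1:ℂ) else 0) * ρ (q2 j, q1) (p2 j, p1) := by
        simp [hF]
      have h1' : F j' (p2 j') (q2 j')
          = Q (p2 j', p1) (q2 j', q1) * γ (q2 j') (p2 j') := by
        simp [hF, hjj]
      have h2 : ∏ k ∈ (Finset.univ.erase j).erase j', F k (p2 k) (q2 k)
          = ∏ k ∈ (Finset.univ.erase j).erase j',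
              ((if p2 k = q2 k then (1:ℂ) else 0) * γ (q2 k) (p2 k)) :=
        Finset.prod_congr rfl fun k hk => by
          have h3 := Finset.mem_erase.mp hk
          have h4 := Finset.mem_erase.mp h3.2
          simp [hF, h3.1, h4.1]
      rw [h1, h1', h2, Finset.prod_mul_distrib]
      rw [← Finset.mul_prod_erase (Finset.univ.erase j') _ hjmem,
        ← Finset.mul_prod_erase (Finset.univ.erase j) _ hj'mem,
        show ((Finset.univ.erase j').erase j : Finset (Fin N))
            = (Finset.univ.erase j).erase j' from Finset.erase_right_comm]
      ring
    rw [Finset.sum_congr rfl fun p2 _ => Finset.sum_congr rfl fun q2 _ => hint p2 q2]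
    rw [master F]
    rw [← Finset.mul_prod_erase Finset.univ _ (Finset.mem_univ j),
      ← Finset.mul_prod_erase (Finset.univ.erase j) _ hj'mem]
    have h3 : ∑ a : S, ∑ b : S, F j a b = ∑ s : S, ρ (s, q1) (s, p1) := by
      refine Finset.sum_congr rfl fun a _ => ?_
      simp [hF, ite_mul, Finset.sum_ite_eq]
    have h3' : ∑ a : S, ∑ b : S, F j' a b
        = ∑ a : S, ∑ b : S, Q (a, p1) (b, q1) * γ b a := by
      simp [hF, hjj]
    have h4 : ∏ k ∈ (Finset.univ.erase j).erase j', (∑ a : S, ∑ b : S, F k a b) = 1 := by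
      rw [Finset.prod_congr rfl (fun k hk => ?_), Finset.prod_const_one]
      have hk1 := (Finset.mem_erase.mp hk).1
      have hk2 := (Finset.mem_erase.mp (Finset.mem_erase.mp hk).2).1
      have e : ∑ a : S, ∑ b : S, F k a b = ∑ a : S, γ a a := by
        refine Finset.sum_congr rfl fun a _ => ?_
        simp [hF, hk1, hk2, ite_mul, Finset.sum_ite_eq]
      rw [e]
      exact hγtr
    rw [h3, h3', h4, mul_one]
    rw [Finset.mul_sum]
    refine Finset.sum_congr rfl fun a _ => ?_
    rw [Finset.mul_sum]
    refine Finset.sum_congr rfl fun b _ => ?_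
    ring
  rw [Finset.sum_congr rfl fun p1 _ => (by
    rw [Finset.sum_comm]
    exact Finset.sum_congr rfl fun q1 _ => inner p1 q1 :
      ∑ p2 : Fin N → S, ∑ q1 : M', ∑ q2 : Fin N → S,
        (Q (p2 j', p1) (q2 j', q1) *
            ∏ k ∈ Finset.univ.erase j', (if p2 k = q2 k then (1:ℂ) else 0)) *
          (ρ (q2 j, q1) (p2 j, p1) * ∏ k ∈ Finset.univ.erase j, γ (q2 k) (p2 k))
      = ∑ q1 : M', ∑ a : S, ∑ b : S,
          Q (a, p1) (b, q1) * (γ b a * ∑ s : S, ρ (s, q1) (s, p1)))]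
  exact sum4_comm (fun a p1 b q1 => Q (a, p1) (b, q1) * (γ b a * ∑ s : S, ρ (s, q1) (s, p1)))


lemma conjTranspose_kron (A : Matrix S S ℂ) (B : Matrix M' M' ℂ) :
    (A ⊗ₖ B)ᴴ = Aᴴ ⊗ₖ Bᴴ := by
  ext ⟨a, b⟩ ⟨c, d⟩
  simp [Matrix.conjTranspose_apply, Matrix.kroneckerMap_apply, star_mul']

lemma kron_psd {A : Matrix S S ℂ} {B : Matrix M' M' ℂ} (hA : A.PosSemidef)
    (hB : B.PosSemidef) : (A ⊗ₖ B).PosSemidef := by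
  have h1 : A ⊗ₖ B = (hA.sqrt ⊗ₖ hB.sqrt)ᴴ * (hA.sqrt ⊗ₖ hB.sqrt) := by
    rw [conjTranspose_kron, hA.posSemidef_sqrt.1.eq, hB.posSemidef_sqrt.1.eq,
      ← Matrix.mul_kronecker_mul, hA.sqrt_mul_self, hB.sqrt_mul_self]
  rw [h1]
  exact Matrix.posSemidef_conjTranspose_mul_self _

lemma ptrace_psd {ρ : Matrix (S × M') (S × M') ℂ} (hρ : ρ.PosSemidef) :
    (Matrix.of fun a b : M' => ∑ s, ρ (s, a) (s, b)).PosSemidef := by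
  refine Matrix.PosSemidef.of_dotProduct_mulVec_nonneg ?_ ?_
  · ext a b
    rw [Matrix.conjTranspose_apply, Matrix.of_apply, Matrix.of_apply, star_sum]
    refine Finset.sum_congr rfl fun s _ => ?_
    have := congrFun (congrFun hρ.1.eq (s, a)) (s, b)
    rw [Matrix.conjTranspose_apply] at this
    exact this
  · intro x
    have sum_collapse : ∀ (s : S) (f : S → M' → ℂ),
        (∑ t : S, ∑ b : M', (if t = s then f t b else 0)) = ∑ b : M', f s b := by
      intro s f
      rw [Finset.sum_comm]
      refine Finset.sum_congr rfl fun b _ => ?_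
      rw [Finset.sum_ite_eq' Finset.univ s (fun t => f t b)]
      simp
    have inner : ∀ s : S, star (fun v : S × M' => if v.1 = s then x v.2 else 0) ⬝ᵥ
          ρ *ᵥ (fun v : S × M' => if v.1 = s then x v.2 else 0)
        = ∑ a : M', ∑ b : M', star (x a) * (ρ (s, a) (s, b) * x b) := by
      intro s
      simp only [dotProduct, Matrix.mulVec, Pi.star_apply, Fintype.sum_prod_type,
        apply_ite (star : ℂ → ℂ), star_zero, ite_mul, zero_mul, mul_ite, mul_zero]
      rw [sum_collapse s (fun t b => star (x b) *
        ∑ x3 : S, ∑ x4 : M', if x3 = s then ρ (t, b) (x3, x4) * x x4 else 0)]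
      refine Finset.sum_congr rfl fun a _ => ?_
      rw [sum_collapse s (fun t b => ρ (s, a) (t, b) * x b), Finset.mul_sum]
    have key : star x ⬝ᵥ (Matrix.of fun a b : M' => ∑ s, ρ (s, a) (s, b)) *ᵥ x
        = ∑ s : S, ∑ a : M', ∑ b : M', star (x a) * (ρ (s, a) (s, b) * x b) := by
      simp only [dotProduct, Matrix.mulVec, Matrix.of_apply, Pi.star_apply]
      have e : ∀ a : M', star (x a) * (∑ b : M', (∑ s : S, ρ (s, a) (s, b)) * x b)
          = ∑ s : S, ∑ b : M', star (x a) * (ρ (s, a) (s, b) * x b) := by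
        intro a
        rw [Finset.mul_sum]
        have e2 : ∀ b : M', star (x a) * ((∑ s : S, ρ (s, a) (s, b)) * x b)
            = ∑ s : S, star (x a) * (ρ (s, a) (s, b) * x b) := by
          intro b
          rw [Finset.sum_mul, Finset.mul_sum]
        rw [Finset.sum_congr rfl fun b _ => e2 b, Finset.sum_comm]
      rw [Finset.sum_congr rfl fun a _ => e a, Finset.sum_comm]
    rw [key]
    refine Finset.sum_nonneg fun s _ => ?_
    rw [← inner s]
    exact hρ.dotProduct_mulVec_nonneg _

lemma psd_sum {n : Type*} [Fintype n] [DecidableEq n] {ι : Type*} (s : Finset ι)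
    (f : ι → Matrix n n ℂ) (h : ∀ i ∈ s, (f i).PosSemidef) :
    (∑ i ∈ s, f i).PosSemidef := by
  classical
  induction s using Finset.induction_on with
  | empty => simpa using Matrix.PosSemidef.zero
  | insert _ _ hnotmem ih =>
    rw [Finset.sum_insert hnotmem]
    exact (h _ (Finset.mem_insert_self _ _)).add
      (ih fun i hi => h i (Finset.mem_insert_of_mem hi))


end PBD

/-- **Position-based decoding error bound.** If `0 ≤ P ≤ I` with `tr[Pρ_{SM}] ≥ 1 − κ` and
`tr[P(γ_S ⊗ ρ_M)] ≤ κ'/N` (with `N = e^m` ancillas), then the pretty-good measurement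
`Ω^j = Λ^{-1/2} Λ^j Λ^{-1/2}` built from `Λ^j = P_{M A_j} ⊗ I`, `Λ = ∑ⱼ Λ^j`, satisfies
`tr[(I − Ω^j) τ̂^j] ≤ 2κ + 4κ'` for every `j`. -/

theorem position_based_decoding
    (N : ℕ) (hN : 0 < N)
    (ρ : Matrix (S × M') (S × M') ℂ) (γ : Matrix S S ℂ)
    (P : Matrix (S × M') (S × M') ℂ) (κ κ' : ℝ)
    (hρ : ρ.PosSemidef) (hρtr : ρ.trace = 1)
    (hγ : γ.PosSemidef) (hγtr : γ.trace = 1)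
    (hP : P.PosSemidef) (hPI : ((1 : Matrix (S × M') (S × M') ℂ) - P).PosSemidef)
    (hκ : 1 - κ ≤ ((P * ρ).trace).re)
    (hκ' : ((P * (γ ⊗ₖ (Matrix.of fun a b : M' => ∑ s, ρ (s, a) (s, b)))).trace).re
      ≤ κ' / N) :
    ∀ j : Fin N,
      ((((1 : Matrix (M' × (Fin N → S)) (M' × (Fin N → S)) ℂ) -
          pinvSqrt (∑ i, Lam P N i) * Lam P N j * pinvSqrt (∑ i, Lam P N i)) *
        tauHat ρ γ N j).trace).re ≤ 2 * κ + 4 * κ' := by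
  intro j
  classical
  set T : Matrix (M' × (Fin N → S)) (M' × (Fin N → S)) ℂ := tauHat ρ γ N j with hTdef
  set A : Matrix (M' × (Fin N → S)) (M' × (Fin N → S)) ℂ := Lam P N j with hAdef
  set B : Matrix (M' × (Fin N → S)) (M' × (Fin N → S)) ℂ :=
    ∑ i ∈ Finset.univ.erase j, Lam P N i with hBdef
  have hsum : (∑ i, Lam P N i) = A + B :=
    (Finset.add_sum_erase Finset.univ (Lam P N) (Finset.mem_univ j)).symm
  have hone : (1 : Matrix S S ℂ).PosSemidef := Matrix.PosSemidef.one
  have hApsd : A.PosSemidef := by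
    rw [hAdef, PBD.Lam_eq_tauHat]; exact PBD.tauHat_posSemidef j hP hone
  have hBpsd : B.PosSemidef := PBD.psd_sum _ _ (fun i _ => by
    rw [PBD.Lam_eq_tauHat]; exact PBD.tauHat_posSemidef i hP hone)
  have h1A : ((1 : Matrix (M' × (Fin N → S)) (M' × (Fin N → S)) ℂ) - A).PosSemidef := by
    rw [hAdef, PBD.one_sub_Lam, PBD.Lam_eq_tauHat]
    exact PBD.tauHat_posSemidef j hPI hone
  have hτ : T.PosSemidef := PBD.tauHat_posSemidef j hρ hγ
  have hHN := PBD.hayashi_nagaoka hApsd hBpsd h1A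
  have hTtr : T.trace = 1 := by
    have h0 := PBD.trace_lam_tauHat_same (1 : Matrix (S × M') (S × M') ℂ) ρ γ hγtr j
    rwa [PBD.Lam_one, Matrix.one_mul, Matrix.one_mul, hρtr] at h0
  have hAT : (A * T).trace = (P * ρ).trace := PBD.trace_lam_tauHat_same P ρ γ hγtr j
  set c : ℂ := (P * (γ ⊗ₖ (Matrix.of fun a b : M' => ∑ s, ρ (s, a) (s, b)))).trace with hcdef
  have hBT : (B * T).trace = ((N : ℂ) - 1) * c := by
    rw [hBdef, Finset.sum_mul, Matrix.trace_sum]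
    rw [Finset.sum_congr rfl (fun i hi =>
      PBD.trace_lam_tauHat_ne P ρ γ hγtr ((Finset.mem_erase.mp hi).1))]
    rw [Finset.sum_const, Finset.card_erase_of_mem (Finset.mem_univ j), Finset.card_univ,
      Fintype.card_fin, nsmul_eq_mul]
    have : ((N - 1 : ℕ) : ℂ) = (N : ℂ) - 1 := by
      have : (1 : ℕ) ≤ N := hN
      push_cast [this]
      ring
    rw [this]
  have hc_nonneg : 0 ≤ c.re := by
    have h0 := PBD.psd_mul_trace_nonneg hP (PBD.kron_psd hγ (PBD.ptrace_psd hρ))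
    rw [Complex.le_def] at h0
    simpa using h0.1
  have hpos := PBD.psd_mul_trace_nonneg hHN hτ
  have hexp : (((((1 : Matrix (M' × (Fin N → S)) (M' × (Fin N → S)) ℂ) - A) + (1 - A)
        + (B + B + B + B)) - (1 - pinvSqrt (A + B) * A * pinvSqrt (A + B))) * T).trace
      = ((1 - (P * ρ).trace) + (1 - (P * ρ).trace)
          + (((N : ℂ) - 1) * c + ((N : ℂ) - 1) * c + ((N : ℂ) - 1) * c + ((N : ℂ) - 1) * c))
        - ((1 - pinvSqrt (A + B) * A * pinvSqrt (A + B)) * T).trace := by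
    simp only [Matrix.sub_mul, Matrix.add_mul, Matrix.trace_sub, Matrix.trace_add,
      Matrix.one_mul]
    rw [hTtr, hAT, hBT]
  rw [hexp] at hpos
  rw [Complex.le_def] at hpos
  have hpos' := hpos.1
  simp only [Complex.add_re, Complex.sub_re, Complex.zero_re, Complex.one_re,
    Complex.mul_re, Complex.natCast_re, Complex.natCast_im, Complex.sub_im,
    Complex.one_im, sub_zero, zero_mul, mul_zero, sub_self] at hpos'
  rw [hsum]
  have hκ2 : 1 - (P * ρ).trace.re ≤ κ := by linarith
  have hc2 : ((N : ℝ) - 1) * c.re ≤ κ' := by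
    have hN1 : (1 : ℝ) ≤ (N : ℝ) := by exact_mod_cast hN
    have h3 : (N : ℝ) * c.re ≤ κ' := by
      have h4 : c.re ≤ κ' / N := hκ'
      calc (N : ℝ) * c.re ≤ (N : ℝ) * (κ' / N) := by
            apply mul_le_mul_of_nonneg_left h4 (by positivity)
        _ = κ' := by field_simp
    nlinarith
  linarith
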